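/- arXiv:math/9801050 — 4 statements merged into one kernel-verified Lean document; each statement's English description precedes it below -/
import Mathlib

section
/- Let $p_1, p_2, p_3$ be pairwise coprime integers $\ge 2$ and let $h = p_1p_2p_3$. Then $W = (p_2p_3, p_3p_1, p_1p_2; h)$ is a reduced regular weight system: $\gcd(p_2p_3, p_3p_1, p_1p_2, h) = 1$ and $\prod_{i}(1-T^{h-a_i})/(1-T^{a_i}) \cdot T^{\epsilon_W}$ is a Laurent polynomial with poles only at $T=0$. -/
open scoped BigOperators

/-- `χ_W(T) = T^{ε_W} ∏ᵢ (1 - T^{h - aᵢ})/(1 - T^{aᵢ})` for a weight system. -/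
noncomputable def chiW (n : ℕ) (a : Fin n → ℕ) (h : ℕ) : RatFunc ℚ :=
  (RatFunc.X : RatFunc ℚ) ^ ((∑ i, (a i : ℤ)) - (h : ℤ)) *
    ∏ i, (1 - (RatFunc.X : RatFunc ℚ) ^ (h - a i)) / (1 - (RatFunc.X : RatFunc ℚ) ^ (a i))

/-- A weight system is regular if `χ_W` has poles at most at `T = 0`,
i.e. `χ_W = T^{-k} · p(T)` for some polynomial `p` and some `k : ℕ`. -/
def RegularWS (n : ℕ) (a : Fin n → ℕ) (h : ℕ) : Prop :=
  ∃ (p : Polynomial ℚ) (k : ℕ),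
    chiW n a h = (RatFunc.X : RatFunc ℚ) ^ (-(k : ℤ)) *
      algebraMap (Polynomial ℚ) (RatFunc ℚ) p

lemma ratfunc_X_pow_ne_one {a : ℕ} (ha : 0 < a) :
    ((RatFunc.X : RatFunc ℚ) ^ a) ≠ 1 := by
  rw [← RatFunc.algebraMap_X, ← map_pow, ← map_one (algebraMap (Polynomial ℚ) (RatFunc ℚ))]
  intro h
  have := RatFunc.algebraMap_injective ℚ h
  have := congrArg Polynomial.natDegree this
  simp [Polynomial.natDegree_X_pow, ha.ne'] at this

lemma geom_div (a m : ℕ) (ha : 0 < a) :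
    (1 - (RatFunc.X : RatFunc ℚ) ^ (a * m)) / (1 - (RatFunc.X : RatFunc ℚ) ^ a) =
      algebraMap (Polynomial ℚ) (RatFunc ℚ)
        (∑ j ∈ Finset.range m, Polynomial.X ^ (a * j)) := by
  have hne : (1 - (RatFunc.X : RatFunc ℚ) ^ a) ≠ 0 := by
    intro h
    exact ratfunc_X_pow_ne_one ha (by linear_combination -h)
  rw [div_eq_iff hne]
  have : (∑ j ∈ Finset.range m, Polynomial.X ^ (a * j)) =
      ∑ j ∈ Finset.range m, ((Polynomial.X : Polynomial ℚ) ^ a) ^ j := by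
    simp [pow_mul]
  rw [this, map_sum]
  have key : (∑ j ∈ Finset.range m, ((RatFunc.X : RatFunc ℚ) ^ a) ^ j) *
      (((RatFunc.X : RatFunc ℚ) ^ a) - 1) = ((RatFunc.X : RatFunc ℚ) ^ a) ^ m - 1 :=
    geom_sum_mul _ _
  simp only [map_pow, RatFunc.algebraMap_X]
  rw [show (1 - (RatFunc.X : RatFunc ℚ) ^ a) = -((RatFunc.X : RatFunc ℚ) ^ a - 1) by ring,
    mul_neg, key]
  rw [← pow_mul]
  ring

/-- For pairwise coprime `p₁, p₂, p₃ ≥ 2` and `h = p₁p₂p₃`, the weight system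
`W = (p₂p₃, p₃p₁, p₁p₂; h)` is reduced and regular. -/
theorem typeI_reduced_regular (p₁ p₂ p₃ : ℕ)
    (hp₁ : 2 ≤ p₁) (hp₂ : 2 ≤ p₂) (hp₃ : 2 ≤ p₃)
    (h12 : Nat.Coprime p₁ p₂) (h23 : Nat.Coprime p₂ p₃) (h31 : Nat.Coprime p₃ p₁) :
    Nat.gcd (p₂ * p₃) (Nat.gcd (p₃ * p₁) (Nat.gcd (p₁ * p₂) (p₁ * p₂ * p₃))) = 1 ∧
    RegularWS 3 ![p₂ * p₃, p₃ * p₁, p₁ * p₂] (p₁ * p₂ * p₃) := by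
  have hp₁0 : 0 < p₁ := by omega
  have hp₂0 : 0 < p₂ := by omega
  have hp₃0 : 0 < p₃ := by omega
  constructor
  · have h1 : Nat.gcd (p₁ * p₂) (p₁ * p₂ * p₃) = p₁ * p₂ :=
      Nat.gcd_eq_left ⟨p₃, rfl⟩
    rw [h1]
    have h2 : Nat.gcd (p₃ * p₁) (p₁ * p₂) = p₁ := by
      rw [mul_comm p₃ p₁, Nat.gcd_mul_left, h23.symm.gcd_eq_one, mul_one]
    rw [h2]
    exact Nat.Coprime.mul h12.symm h31
  · set h := p₁ * p₂ * p₃ with hh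
    have e1 : h - p₂ * p₃ = p₂ * p₃ * (p₁ - 1) := by
      rw [hh, Nat.mul_sub, mul_one]; ring_nf
    have e2 : h - p₃ * p₁ = p₃ * p₁ * (p₂ - 1) := by
      rw [hh, Nat.mul_sub, mul_one]; ring_nf
    have e3 : h - p₁ * p₂ = p₁ * p₂ * (p₃ - 1) := by
      rw [hh, Nat.mul_sub, mul_one]
    set q₁ : Polynomial ℚ := ∑ j ∈ Finset.range (p₁ - 1), Polynomial.X ^ (p₂ * p₃ * j)
    set q₂ : Polynomial ℚ := ∑ j ∈ Finset.range (p₂ - 1), Polynomial.X ^ (p₃ * p₁ * j)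
    set q₃ : Polynomial ℚ := ∑ j ∈ Finset.range (p₃ - 1), Polynomial.X ^ (p₁ * p₂ * j)
    refine ⟨Polynomial.X ^ (p₂ * p₃ + p₃ * p₁ + p₁ * p₂) * (q₁ * q₂ * q₃), h, ?_⟩
    have hX : (RatFunc.X : RatFunc ℚ) ≠ 0 := RatFunc.X_ne_zero
    rw [chiW, Fin.prod_univ_three, Fin.sum_univ_three]
    simp only [Matrix.cons_val_zero, Matrix.cons_val_one, Matrix.head_cons,
      Matrix.cons_val_two, Matrix.tail_cons]
    rw [e1, e2, e3, geom_div _ _ (by positivity), geom_div _ _ (by positivity),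
      geom_div _ _ (by positivity)]
    rw [show ((↑(p₂ * p₃) : ℤ) + ↑(p₃ * p₁) + ↑(p₁ * p₂)) - (h : ℤ)
        = -(h : ℤ) + ((p₂ * p₃ + p₃ * p₁ + p₁ * p₂ : ℕ) : ℤ) by push_cast; ring]
    rw [zpow_add₀ hX, zpow_natCast]
    rw [map_mul, map_mul, map_mul, map_pow, RatFunc.algebraMap_X]
    ring
end

section
/- Let $p_1, p_2, p_3$ be pairwise coprime positive integers $\ge 2$ and $h = p_1p_2p_3$. Then in $\mathbb{Q}(\lambda)$ one has the identity $\prod_{j=1}^{\mu}(\lambda - e^{2\pi i m_j/h}) = \frac{(\lambda^{h}-1)(\lambda^{p_1}-1)(\lambda^{p_2}-1)(\lambda^{p_3}-1)}{(\lambda^{p_1p_2}-1)(\lambda^{p_2p_3}-1)(\lambda^{p_3p_1}-1)(\lambda-1)}$, where $m_1,\dots,m_\mu$ are the exponents of the regular weight system $W = (p_2p_3, p_3p_1, p_1p_2; h)$ (i.e. $\chi_W(T) = \sum_j T^{m_j}$). In particular the right-hand side is a polynomial in $\lambda$. -/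
/-!
Since every weight `aᵢ = h / pᵢ` divides `h`, each factor `Tᵃ (1 - T^(h-a)) / (1 - Tᵃ)` of `χ_W`
is a geometric sum, so the exponents are `∑ aᵢ kᵢ - h` with `1 ≤ kᵢ < pᵢ` (a sum of Laurent
monomials determines its exponents, as one reads off in Laurent series). With `ζ = e^{2πi/h}`
the corresponding root is `ω₁^k₁ ω₂^k₂ ω₃^k₃`, where `ωᵢ = ζ^aᵢ` is a primitive `pᵢ`-th root of
unity. The product over the `kᵢ` then collapses one index at a time by
`(X^q - c^q) ∏_{0<k<p} (X^q - (ωᵏc)^q) = X^(qp) - c^(qp)`, which holds because `ω^q` is still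
a primitive `p`-th root for `q` coprime to `p`.
-/

open scoped BigOperators

open Finset

theorem geom_sum_Ico_one {K : Type*} [Field K] {x : K} (hx : x ≠ 1) (n : ℕ) :
    ∑ k ∈ Ico 1 n, x ^ k = x * ((1 - x ^ (n - 1)) / (1 - x)) := by
  rcases n with _ | n
  · simp
  have hx₁ : x - 1 ≠ 0 := sub_ne_zero.mpr hx
  have hx₂ : 1 - x ≠ 0 := sub_ne_zero.mpr hx.symm
  rw [geom_sum_Ico hx (by omega), Nat.add_sub_cancel]
  field_simp
  ring

theorem Fintype.prod_piFinset_fin_three {α M : Type*} [CommMonoid M] (t : Fin 3 → Finset α)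
    (g : (Fin 3 → α) → M) :
    ∏ k ∈ Fintype.piFinset t, g k = ∏ x ∈ t 0, ∏ y ∈ t 1, ∏ z ∈ t 2, g ![x, y, z] := by
  simp_rw [← prod_product']
  refine prod_nbij' (fun k => (k 0, k 1, k 2)) (fun x => ![x.1, x.2.1, x.2.2]) ?_ ?_ ?_ ?_ ?_
  · simp +contextual [Fintype.mem_piFinset]
  · simp [Fintype.mem_piFinset, Fin.forall_fin_succ]
  · intro k _; ext i; fin_cases i <;> rfl
  · intro x _; rfl
  · intro k _; congr; ext i; fin_cases i <;> rfl

namespace RatFunc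

variable {K : Type*} [Field K]

theorem X_pow_ne_one {a : ℕ} (ha : a ≠ 0) : (X : RatFunc K) ^ a ≠ 1 := fun h =>
  (transcendental_X.pow (Nat.pos_of_ne_zero ha)) (h ▸ isAlgebraic_one)

theorem coeff_algebraMap_sum_map_X_zpow (S : Multiset ℤ) (n : ℤ) :
    (algebraMap (RatFunc K) (LaurentSeries K) (S.map ((X : RatFunc K) ^ ·)).sum).coeff n
      = S.count n := by
  induction S using Multiset.induction_on with
  | empty => simp
  | cons a S ih =>
    simp only [Multiset.map_cons, Multiset.sum_cons, map_add, map_zpow₀, coe_X, ← single_zpow,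
      HahnSeries.coeff_add', Pi.add_apply, HahnSeries.coeff_single, ih, Multiset.count_cons]
    split_ifs <;> simp [add_comm]

theorem multiset_eq_of_sum_map_X_zpow_eq [CharZero K] {S T : Multiset ℤ}
    (h : (S.map ((X : RatFunc K) ^ ·)).sum = (T.map ((X : RatFunc K) ^ ·)).sum) : S = T := by
  ext n
  have := congrArg (fun f => (algebraMap (RatFunc K) (LaurentSeries K) f).coeff n) h
  simpa only [coeff_algebraMap_sum_map_X_zpow, Nat.cast_inj] using this

theorem prod_eq_prod_of_sum_X_zpow_eq [CharZero K] {ι κ M : Type*} [CommMonoid M]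
    {s : Finset ι} {t : Finset κ} {u : ι → ℤ} {v : κ → ℤ}
    (h : ∑ i ∈ s, (X : RatFunc K) ^ u i = ∑ k ∈ t, (X : RatFunc K) ^ v k) (f : ℤ → M) :
    ∏ i ∈ s, f (u i) = ∏ k ∈ t, f (v k) := by
  have hST : s.val.map u = t.val.map v :=
    multiset_eq_of_sum_map_X_zpow_eq (K := K) <| by
      simpa only [Multiset.map_map, Function.comp_def, ← Finset.sum_eq_multiset_sum] using h
  simpa only [Multiset.map_map, Function.comp_def, ← Finset.prod_eq_multiset_prod] using
    congrArg (fun S => (S.map f).prod) hST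

end RatFunc

theorem chiW_eq_sum_piFinset (n : ℕ) (a q : Fin n → ℕ) (h : ℕ) (hh : h ≠ 0)
    (hq : ∀ i, a i * q i = h) :
    chiW n a h = ∑ k ∈ Fintype.piFinset fun i => Ico 1 (q i),
      (RatFunc.X : RatFunc ℚ) ^ (((∑ i, a i * k i : ℕ) : ℤ) - h) := by
  open RatFunc in
  have hfactor : ∀ i, (X : RatFunc ℚ) ^ a i * ((1 - X ^ (h - a i)) / (1 - X ^ a i))
      = ∑ k ∈ Ico 1 (q i), X ^ (a i * k) := fun i => by
    have hsub : h - a i = a i * (q i - 1) := by rw [Nat.mul_sub_one, hq i]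
    simp only [hsub, pow_mul]
    exact (geom_sum_Ico_one (X_pow_ne_one (left_ne_zero_of_mul (hq i ▸ hh))) _).symm
  open RatFunc in
  calc chiW n a h
      = X ^ (-(h : ℤ)) * ∏ i, (X : RatFunc ℚ) ^ a i * ((1 - X ^ (h - a i)) / (1 - X ^ a i)) := by
        rw [chiW, prod_mul_distrib, prod_pow_eq_pow_sum, ← mul_assoc, ← zpow_natCast,
          ← zpow_add₀ X_ne_zero]
        push_cast
        rw [neg_add_eq_sub]
    _ = ∑ k ∈ Fintype.piFinset fun i => Ico 1 (q i),
          X ^ (-(h : ℤ)) * ∏ i, (X : RatFunc ℚ) ^ (a i * k i) := by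
        simp only [hfactor, prod_univ_sum, mul_sum]
    _ = _ := by
        refine sum_congr rfl fun k _ => ?_
        rw [prod_pow_eq_pow_sum, ← zpow_natCast, ← zpow_add₀ X_ne_zero, neg_add_eq_sub]

theorem Complex.exp_two_pi_mul_I_mul_div (m : ℤ) (n : ℕ) :
    exp (2 * Real.pi * I * m / n) = exp (2 * Real.pi * I / n) ^ m := by
  rw [← exp_int_mul]
  congr 1
  ring

theorem zpow_sum_mul_sub_eq_prod {K ι : Type*} [CommGroupWithZero K] [Fintype ι]
    {ζ : K} (hζ₀ : ζ ≠ 0) {h : ℕ} (hζ : ζ ^ h = 1) (a k : ι → ℕ) :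
    ζ ^ (((∑ i, a i * k i : ℕ) : ℤ) - h) = ∏ i, (ζ ^ a i) ^ k i := by
  rw [zpow_sub₀ hζ₀, zpow_natCast, zpow_natCast, hζ, div_one, ← prod_pow_eq_pow_sum]
  simp only [pow_mul]

section RootsOfUnity

open Polynomial

variable {K : Type*} [CommRing K] [IsDomain K] {ω : K} {p : ℕ}

theorem X_sub_C_mul_prod_Ico (hω : IsPrimitiveRoot ω p) (hp : 0 < p) (c : K) :
    (X - C c) * ∏ z ∈ Ico 1 p, (X - C (ω ^ z * c)) = X ^ p - C (c ^ p) := by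
  rw [X_pow_sub_C_eq_prod hω hp rfl, range_eq_Ico, prod_eq_prod_Ico_succ_bot hp]
  simp

theorem X_pow_sub_C_mul_prod_Ico (hω : IsPrimitiveRoot ω p) (hp : 0 < p) {q : ℕ}
    (hq : q.Coprime p) (c : K) :
    (X ^ q - C (c ^ q)) * ∏ z ∈ Ico 1 p, (X ^ q - C ((ω ^ z * c) ^ q))
      = X ^ (q * p) - C (c ^ (q * p)) := by
  have h := congrArg (expand K q) (X_sub_C_mul_prod_Ico (hω.pow_of_coprime q hq) hp (c ^ q))
  simp only [map_mul (expand K q), map_sub (expand K q), map_prod (expand K q),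
    map_pow (expand K q), expand_X, expand_C, ← pow_mul] at h
  simpa only [mul_pow, ← pow_mul, mul_comm _ q] using h

theorem prod_prod_X_sub_C_mul_eq {ω₂ ω₃ : K} {p₂ p₃ : ℕ} (hω₂ : IsPrimitiveRoot ω₂ p₂)
    (hω₃ : IsPrimitiveRoot ω₃ p₃) (hp₂ : 0 < p₂) (hp₃ : 0 < p₃) (h23 : p₂.Coprime p₃) (c : K) :
    (∏ y ∈ Ico 1 p₂, ∏ z ∈ Ico 1 p₃, (X - C (ω₂ ^ y * ω₃ ^ z * c))) *
        ((X ^ p₂ - C (c ^ p₂)) * (X ^ p₃ - C (c ^ p₃)))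
      = (X - C c) * (X ^ (p₂ * p₃) - C (c ^ (p₂ * p₃))) := by
  have hinner : (∏ y ∈ Ico 1 p₂, (X - C (ω₂ ^ y * c))) *
      ∏ y ∈ Ico 1 p₂, ∏ z ∈ Ico 1 p₃, (X - C (ω₂ ^ y * ω₃ ^ z * c))
      = ∏ y ∈ Ico 1 p₂, (X ^ p₃ - C ((ω₂ ^ y * c) ^ p₃)) := by
    rw [← prod_mul_distrib]
    refine prod_congr rfl fun y _ => ?_
    rw [← X_sub_C_mul_prod_Ico hω₃ hp₃]
    exact congrArg _ (prod_congr rfl fun z _ => by congr 2; ring)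
  have houter := X_sub_C_mul_prod_Ico hω₂ hp₂ c
  have hcomposed := X_pow_sub_C_mul_prod_Ico hω₂ hp₂ h23.symm c
  rw [mul_comm p₃] at hcomposed
  linear_combination (-(X ^ p₃ - C (c ^ p₃)) *
      ∏ y ∈ Ico 1 p₂, ∏ z ∈ Ico 1 p₃, (X - C (ω₂ ^ y * ω₃ ^ z * c))) * houter
    + ((X - C c) * (X ^ p₃ - C (c ^ p₃))) * hinner + (X - C c) * hcomposed

theorem prod_prod_prod_X_sub_C_mul_eq {ω₁ ω₂ ω₃ : K} {p₁ p₂ p₃ : ℕ} (hω₁ : IsPrimitiveRoot ω₁ p₁)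
    (hω₂ : IsPrimitiveRoot ω₂ p₂) (hω₃ : IsPrimitiveRoot ω₃ p₃) (hp₁ : 0 < p₁) (hp₂ : 0 < p₂)
    (hp₃ : 0 < p₃) (h12 : p₁.Coprime p₂) (h23 : p₂.Coprime p₃) (h31 : p₃.Coprime p₁) :
    (∏ x ∈ Ico 1 p₁, ∏ y ∈ Ico 1 p₂, ∏ z ∈ Ico 1 p₃, (X - C (ω₁ ^ x * ω₂ ^ y * ω₃ ^ z))) *
        ((X ^ (p₁ * p₂) - 1) * (X ^ (p₂ * p₃) - 1) * (X ^ (p₃ * p₁) - 1) * (X - 1))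
      = (X ^ (p₁ * p₂ * p₃) - 1) * (X ^ p₁ - 1) * (X ^ p₂ - 1) * (X ^ p₃ - 1) := by
  set T := ∏ x ∈ Ico 1 p₁, ∏ y ∈ Ico 1 p₂, ∏ z ∈ Ico 1 p₃, (X - C (ω₁ ^ x * ω₂ ^ y * ω₃ ^ z))
  set G : ℕ → K[X] := fun q => ∏ x ∈ Ico 1 p₁, (X ^ q - C ((ω₁ ^ x) ^ q))
  have hT : T * (G p₂ * G p₃) = (∏ x ∈ Ico 1 p₁, (X - C (ω₁ ^ x))) * G (p₂ * p₃) := by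
    simp only [G, T, ← prod_mul_distrib]
    refine prod_congr rfl fun x _ => ?_
    rw [← prod_prod_X_sub_C_mul_eq hω₂ hω₃ hp₂ hp₃ h23 (ω₁ ^ x)]
    exact congrArg (· * _)
      (prod_congr rfl fun y _ => prod_congr rfl fun z _ => by congr 2; ring)
  have hA : (X - 1) * ∏ x ∈ Ico 1 p₁, (X - C (ω₁ ^ x)) = X ^ p₁ - 1 := by
    simpa using X_sub_C_mul_prod_Ico hω₁ hp₁ 1
  have hG : ∀ q, q.Coprime p₁ → (X ^ q - 1) * G q = X ^ (q * p₁) - 1 := fun q hq => by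
    simpa [G] using X_pow_sub_C_mul_prod_Ico hω₁ hp₁ hq 1
  have hG₂ := hG p₂ h12.symm
  have hG₃ := hG p₃ h31
  have hG₂₃ := hG (p₂ * p₃) (Nat.Coprime.mul_left h12.symm h31)
  linear_combination (X ^ p₂ - 1) * (X ^ p₃ - 1) * (X ^ (p₂ * p₃) - 1) * (X - 1) * hT
    - T * (X ^ (p₃ * p₁) - 1) * (X ^ (p₂ * p₃) - 1) * (X - 1) * hG₂
    - T * (X ^ p₂ - 1) * G p₂ * (X ^ (p₂ * p₃) - 1) * (X - 1) * hG₃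
    + G (p₂ * p₃) * (X ^ (p₂ * p₃) - 1) * (X ^ p₂ - 1) * (X ^ p₃ - 1) * hA
    + (X ^ p₁ - 1) * (X ^ p₂ - 1) * (X ^ p₃ - 1) * hG₂₃

end RootsOfUnity

/-- For pairwise coprime `p₁,p₂,p₃ ≥ 2`, `h = p₁p₂p₃`, and the regular weight
system `W = (p₂p₃, p₃p₁, p₁p₂; h)` with exponents `m₁,…,m_μ`, one has
`∏ⱼ (λ - e^{2πi mⱼ/h}) · (λ^{p₁p₂}-1)(λ^{p₂p₃}-1)(λ^{p₃p₁}-1)(λ-1)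
  = (λ^h-1)(λ^{p₁}-1)(λ^{p₂}-1)(λ^{p₃}-1)`. -/
theorem typeI_char_poly (p₁ p₂ p₃ : ℕ)
    (hp₁ : 2 ≤ p₁) (hp₂ : 2 ≤ p₂) (hp₃ : 2 ≤ p₃)
    (h12 : Nat.Coprime p₁ p₂) (h23 : Nat.Coprime p₂ p₃) (h31 : Nat.Coprime p₃ p₁)
    (μ : ℕ) (m : Fin μ → ℤ)
    (hχ : chiW 3 ![p₂ * p₃, p₃ * p₁, p₁ * p₂] (p₁ * p₂ * p₃)
      = ∑ j, (RatFunc.X : RatFunc ℚ) ^ (m j)) :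
    (∏ j, (Polynomial.X - Polynomial.C
        (Complex.exp (2 * Real.pi * Complex.I * (m j : ℂ) / ((p₁ * p₂ * p₃ : ℕ) : ℂ))))) *
      ((Polynomial.X ^ (p₁ * p₂) - 1) * (Polynomial.X ^ (p₂ * p₃) - 1) *
        (Polynomial.X ^ (p₃ * p₁) - 1) * (Polynomial.X - 1))
    = (Polynomial.X ^ (p₁ * p₂ * p₃) - 1) * (Polynomial.X ^ p₁ - 1) *
        (Polynomial.X ^ p₂ - 1) * ((Polynomial.X ^ p₃ - 1) : Polynomial ℂ) := by
  have hp₁₀ : 0 < p₁ := by omega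
  have hp₂₀ : 0 < p₂ := by omega
  have hp₃₀ : 0 < p₃ := by omega
  have hh : p₁ * p₂ * p₃ ≠ 0 := by positivity
  have hζ := Complex.isPrimitiveRoot_exp (p₁ * p₂ * p₃) hh
  simp only [Complex.exp_two_pi_mul_I_mul_div]
  set ζ := Complex.exp (2 * Real.pi * Complex.I / ((p₁ * p₂ * p₃ : ℕ) : ℂ))
  have hexponents := hχ.symm.trans <| chiW_eq_sum_piFinset 3 ![p₂ * p₃, p₃ * p₁, p₁ * p₂]
    ![p₁, p₂, p₃] (p₁ * p₂ * p₃) hh fun i => by fin_cases i <;> simp <;> ring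
  rw [RatFunc.prod_eq_prod_of_sum_X_zpow_eq hexponents
    (fun n => Polynomial.X - Polynomial.C (ζ ^ n))]
  simp only [zpow_sum_mul_sub_eq_prod (hζ.ne_zero hh) hζ.pow_eq_one, Fin.prod_univ_three,
    Fintype.prod_piFinset_fin_three, Matrix.cons_val_zero, Matrix.cons_val_one,
    Matrix.cons_val_two, Matrix.head_cons, Matrix.tail_cons]
  exact prod_prod_prod_X_sub_C_mul_eq (hζ.pow hh.bot_lt (by ring)) (hζ.pow hh.bot_lt (by ring))
    (hζ.pow hh.bot_lt (by ring)) hp₁₀ hp₂₀ hp₃₀ h12 h23 h31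
end

section
/- Let $W=(a_1,a_2,a_3;h)$ be a regular weight system and for $i=1,2,3$ write $h/a_i = p_i/q_i$ in lowest terms, $p_{ij} = \mathrm{lcm}(p_i,p_j)$, $p_{123} = \mathrm{lcm}(p_1,p_2,p_3)$. If $W$ is reduced (i.e. $\gcd(a_1,a_2,a_3,h)=1$) then $p_{123} = h$. -/
/-! Each `pᵢ = h / gcd(h, aᵢ)` divides `h`, so `L = lcm(p₁, p₂, p₃)` divides `h`. Conversely
`pᵢ ∣ L` means `h ∣ L · gcd(h, aᵢ) ∣ L · aᵢ`; together with `h ∣ L · h` this gives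
`h ∣ L · gcd(a₁, a₂, a₃, h) = L`. -/

theorem Nat.dvd_mul_of_div_gcd_dvd {h a L : ℕ} (hL : h / h.gcd a ∣ L) : h ∣ L * a :=
  calc h = h / h.gcd a * h.gcd a := (Nat.div_mul_cancel (Nat.gcd_dvd_left h a)).symm
    _ ∣ L * h.gcd a := Nat.mul_dvd_mul_right hL _
    _ ∣ L * a := Nat.mul_dvd_mul_left L (Nat.gcd_dvd_right h a)

theorem lcm_p_eq_h_general (h a₁ a₂ a₃ : ℕ)
    (hred : Nat.gcd a₁ (Nat.gcd a₂ (Nat.gcd a₃ h)) = 1) :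
    Nat.lcm (h / Nat.gcd h a₁) (Nat.lcm (h / Nat.gcd h a₂) (h / Nat.gcd h a₃)) = h := by
  set L := Nat.lcm (h / Nat.gcd h a₁) (Nat.lcm (h / Nat.gcd h a₂) (h / Nat.gcd h a₃))
  have hp : ∀ a, h / Nat.gcd h a ∣ h := fun a => Nat.div_dvd_of_dvd (Nat.gcd_dvd_left h a)
  have hp₁ : h / Nat.gcd h a₁ ∣ L := Nat.dvd_lcm_left _ _
  have hp₂ : h / Nat.gcd h a₂ ∣ L := (Nat.dvd_lcm_left _ _).trans (Nat.dvd_lcm_right _ _)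
  have hp₃ : h / Nat.gcd h a₃ ∣ L := (Nat.dvd_lcm_right _ _).trans (Nat.dvd_lcm_right _ _)
  apply Nat.dvd_antisymm (Nat.lcm_dvd (hp a₁) (Nat.lcm_dvd (hp a₂) (hp a₃)))
  have hdvd : h ∣ Nat.gcd (L * a₁) (Nat.gcd (L * a₂) (Nat.gcd (L * a₃) (L * h))) :=
    Nat.dvd_gcd (Nat.dvd_mul_of_div_gcd_dvd hp₁) <|
      Nat.dvd_gcd (Nat.dvd_mul_of_div_gcd_dvd hp₂) <|
        Nat.dvd_gcd (Nat.dvd_mul_of_div_gcd_dvd hp₃) (Nat.dvd_mul_left h L)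
  rwa [Nat.gcd_mul_left, Nat.gcd_mul_left, Nat.gcd_mul_left, hred, mul_one] at hdvd

/-- For a reduced weight system `(a₁,a₂,a₃;h)` with `pᵢ = h / gcd(h,aᵢ)`,
one has `lcm(p₁,p₂,p₃) = h`. -/
theorem lcm_p_eq_h (h a₁ a₂ a₃ : ℕ)
    (ha₁ : 0 < a₁) (ha₂ : 0 < a₂) (ha₃ : 0 < a₃)
    (h₁ : a₁ < h) (h₂ : a₂ < h) (h₃ : a₃ < h)
    (hred : Nat.gcd a₁ (Nat.gcd a₂ (Nat.gcd a₃ h)) = 1) :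
    Nat.lcm (h / Nat.gcd h a₁) (Nat.lcm (h / Nat.gcd h a₂) (h / Nat.gcd h a₃)) = h :=
  lcm_p_eq_h_general h a₁ a₂ a₃ hred
end

section
/- Let $W = (a_1, a_2, a_3; h)$ be a reduced regular weight system with $p_i = h/\gcd(h, a_i)$, and suppose a prime $k$ divides both $\epsilon_W = a_1+a_2+a_3-h$ and $h$. Then $k$ divides $\mathrm{lcm}(p_i, p_j)$ for every pair $i \ne j$. -/
open scoped BigOperators

/-- For a reduced regular weight system `(a₁,a₂,a₃;h)` with
`pᵢ = h/gcd(h,aᵢ)`, if a prime `k` divides both `ε_W` and `h`, then `k`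
divides `lcm(pᵢ,pⱼ)` for every pair `i ≠ j`. -/
theorem prime_dvd_lcm_of_dvd_eps_h (h : ℕ) (a : Fin 3 → ℕ)
    (ha : ∀ i, 0 < a i ∧ a i < h)
    (hred : Nat.gcd (a 0) (Nat.gcd (a 1) (Nat.gcd (a 2) h)) = 1)
    (hreg : RegularWS 3 a h)
    (k : ℕ) (hk : Nat.Prime k)
    (hkε : (k : ℤ) ∣ ((a 0 : ℤ) + a 1 + a 2 - h)) (hkh : k ∣ h) :
    ∀ i j : Fin 3, i ≠ j →
      k ∣ Nat.lcm (h / Nat.gcd h (a i)) (h / Nat.gcd h (a j)) := by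
  intro i j hij
  by_contra hcon
  have hpi : ¬ k ∣ h / Nat.gcd h (a i) := fun hd => hcon (hd.trans (Nat.dvd_lcm_left _ _))
  have hpj : ¬ k ∣ h / Nat.gcd h (a j) := fun hd => hcon (hd.trans (Nat.dvd_lcm_right _ _))
  have key : ∀ m : Fin 3, ¬ k ∣ h / Nat.gcd h (a m) → k ∣ a m := by
    intro m hm
    have hg : k ∣ Nat.gcd h (a m) := by
      have heq := Nat.div_mul_cancel (Nat.gcd_dvd_left h (a m))
      rcases (Nat.Prime.dvd_mul hk).1 (by rw [heq]; exact hkh) with h1 | h2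
      · exact absurd h1 hm
      · exact h2
    exact hg.trans (Nat.gcd_dvd_right _ _)
  have hi := key i hpi
  have hj := key j hpj
  have hS : (k:ℤ) ∣ ((a 0 : ℤ) + a 1 + a 2) := by
    have hh : (k:ℤ) ∣ (h:ℤ) := Int.natCast_dvd_natCast.2 hkh
    have := dvd_add hkε hh
    simpa using this
  have hall : ∀ m : Fin 3, k ∣ a m := by
    intro m
    by_cases hmi : m = i
    · exact hmi ▸ hi
    by_cases hmj : m = j
    · exact hmj ▸ hj
    have hi' : (k:ℤ) ∣ (a i : ℤ) := Int.natCast_dvd_natCast.2 hi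
    have hj' : (k:ℤ) ∣ (a j : ℤ) := Int.natCast_dvd_natCast.2 hj
    have hsum : (a m : ℤ) = ((a 0 : ℤ) + a 1 + a 2) - a i - a j := by
      fin_cases i <;> fin_cases j <;> fin_cases m <;> simp_all <;> ring
    have : (k:ℤ) ∣ (a m : ℤ) := by
      rw [hsum]; exact (hS.sub hi').sub hj'
    exact_mod_cast this
  have : k ∣ Nat.gcd (a 0) (Nat.gcd (a 1) (Nat.gcd (a 2) h)) :=
    Nat.dvd_gcd (hall 0) (Nat.dvd_gcd (hall 1) (Nat.dvd_gcd (hall 2) hkh))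
  rw [hred] at this
  exact hk.one_lt.ne' (Nat.dvd_one.1 this)
end
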